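/- Let (K_m)_{m≥1} be a nonincreasing sequence of compact subsets of C and let K = ⋂_{m=1}^∞ K_m. Then the sequence φ(K_m) converges to φ(K) as m → ∞ (equivalently, inf_{m≥1} φ(K_m) = φ(K)). -/

import Mathlib

open MeasureTheory Matrix Set Filter Topology
open scoped ENNReal

noncomputable section

/-- The space `C` of continuous functions on `[0,1]` vanishing at `0`,
with the supremum metric (inherited from `C([0,1], ℝ)`). -/
abbrev Cz : Type := {f : C(Set.Icc (0:ℝ) 1, ℝ) // f ⟨0, ⟨le_refl 0, zero_le_one⟩⟩ = 0}

/-- The projection `π_n : C → ℝ^n`, `x ↦ (x(t_1), …, x(t_n))`. -/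
def proj (t : ℕ → ℝ) (ht : ∀ k, t k ∈ Set.Ioc (0:ℝ) 1) (n : ℕ) (x : Cz) : Fin n → ℝ :=
  fun i => (x : C(Set.Icc (0:ℝ) 1, ℝ)) ⟨t i, Set.Ioc_subset_Icc_self (ht i)⟩

/-- The covariance matrix `M_n` with entries `min (t j) (t r)`. -/
def covM (t : ℕ → ℝ) (n : ℕ) : Matrix (Fin n) (Fin n) ℝ :=
  Matrix.of fun j r => min (t (j : ℕ)) (t (r : ℕ))

/-- The centered Gaussian measure on `ℝ^n` with (positive definite) covariance matrix `M`:
the measure with density `u ↦ ((2π)^n det M)^{-1/2} exp (-⟨u, M⁻¹ u⟩ / 2)` w.r.t. Lebesgue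
measure. -/
def gauss (n : ℕ) (M : Matrix (Fin n) (Fin n) ℝ) : Measure (Fin n → ℝ) :=
  volume.withDensity fun u =>
    ENNReal.ofReal ((((2 * Real.pi) ^ n * M.det) ^ (-(1:ℝ)/2 : ℝ)) *
      Real.exp (-(u ⬝ᵥ M⁻¹.mulVec u) / 2))

/-- `φ(K) = inf_{n ≥ 1} ν_n (π_n(K))`. -/
def phi (t : ℕ → ℝ) (ht : ∀ k, t k ∈ Set.Ioc (0:ℝ) 1) (K : Set Cz) : ℝ≥0∞ :=
  ⨅ n : ℕ, gauss (n+1) (covM t (n+1)) (proj t ht (n+1) '' K)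

/-- `μ(A) = sup {φ(K) : K ⊆ A, K compact}`. -/
def mu (t : ℕ → ℝ) (ht : ∀ k, t k ∈ Set.Ioc (0:ℝ) 1) (A : Set Cz) : ℝ≥0∞ :=
  ⨆ (K : Set Cz) (_ : K ⊆ A) (_ : IsCompact K), phi t ht K


/-! Each `π_n` is continuous and the `K_m` are compact, so `π_n (⋂ K_m) = ⋂ π_n (K_m)`; since
`ν_n` is finite on compact sets, continuity from above gives `ν_n (π_n (⋂ K_m)) = inf_m ν_n (π_n K_m)`,
and exchanging the infima over `n` and `m` yields `φ (⋂ K_m) = inf_m φ (K_m)`. -/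

lemma continuous_proj (t : ℕ → ℝ) (ht : ∀ k, t k ∈ Set.Ioc (0:ℝ) 1) (n : ℕ) :
    Continuous (proj t ht n) :=
  continuous_pi fun _ => (continuous_eval_const _).comp continuous_subtype_val

instance isLocallyFiniteMeasure_gauss (n : ℕ) (M : Matrix (Fin n) (Fin n) ℝ) :
    IsLocallyFiniteMeasure (gauss n M) :=
  IsLocallyFiniteMeasure.withDensity_ofReal <| by
    simp only [dotProduct, Matrix.mulVec]
    fun_prop

lemma image_iInter_of_antitone_of_isCompact {X Y : Type*} [TopologicalSpace X]
    [TopologicalSpace Y] [T2Space X] [T1Space Y] {f : X → Y} (hf : Continuous f)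
    {K : ℕ → Set X} (hK : ∀ m, IsCompact (K m)) (hmono : Antitone K) :
    f '' ⋂ m, K m = ⋂ m, f '' K m := by
  refine (image_iInter_subset _ _).antisymm fun y hy => ?_
  have hfiber : ∀ m, (K m ∩ f ⁻¹' {y}).Nonempty := fun m => by
    obtain ⟨x, hx, rfl⟩ := mem_iInter.1 hy m
    exact ⟨x, hx, rfl⟩
  obtain ⟨x, hx⟩ := IsCompact.nonempty_iInter_of_sequence_nonempty_isCompact_isClosed
    (fun m => K m ∩ f ⁻¹' {y}) (fun m => inter_subset_inter_left _ (hmono m.le_succ)) hfiber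
    ((hK 0).inter_right (isClosed_singleton.preimage hf))
    (fun m => (hK m).isClosed.inter (isClosed_singleton.preimage hf))
  rw [mem_iInter] at hx
  exact ⟨x, mem_iInter.2 fun m => (hx m).1, (hx 0).2⟩

lemma measure_image_iInter_of_antitone_of_isCompact {X Y : Type*} [TopologicalSpace X]
    [TopologicalSpace Y] [T2Space X] [T2Space Y] [MeasurableSpace Y] [OpensMeasurableSpace Y]
    (μ : Measure Y) [IsFiniteMeasureOnCompacts μ] {f : X → Y} (hf : Continuous f)
    {K : ℕ → Set X} (hK : ∀ m, IsCompact (K m)) (hmono : Antitone K) :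
    μ (f '' ⋂ m, K m) = ⨅ m, μ (f '' K m) := by
  have himage : ∀ m, IsCompact (f '' K m) := fun m => (hK m).image hf
  rw [image_iInter_of_antitone_of_isCompact hf hK hmono]
  exact Antitone.measure_iInter (fun _ _ hmn => image_mono (hmono hmn))
    (fun m => (himage m).isClosed.measurableSet.nullMeasurableSet)
    ⟨0, (himage 0).measure_ne_top⟩

lemma phi_mono (t : ℕ → ℝ) (ht : ∀ k, t k ∈ Set.Ioc (0:ℝ) 1) : Monotone (phi t ht) :=
  fun _ _ hKL => iInf_mono fun _ => measure_mono (image_mono hKL)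

lemma phi_iInter_of_antitone (t : ℕ → ℝ) (ht : ∀ k, t k ∈ Set.Ioc (0:ℝ) 1)
    {K : ℕ → Set Cz} (hK : ∀ m, IsCompact (K m)) (hmono : Antitone K) :
    phi t ht (⋂ m, K m) = ⨅ m, phi t ht (K m) := by
  simp only [phi]
  rw [iInf_comm]
  exact iInf_congr fun n =>
    measure_image_iInter_of_antitone_of_isCompact _ (continuous_proj t ht (n + 1)) hK hmono

theorem stmt6_general (t : ℕ → ℝ) (ht : ∀ k, t k ∈ Set.Ioc (0:ℝ) 1)
    (K : ℕ → Set Cz) (hK : ∀ m, IsCompact (K m)) (hmono : Antitone K) :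
    Tendsto (fun m => phi t ht (K m)) atTop (𝓝 (phi t ht (⋂ m, K m))) := by
  rw [phi_iInter_of_antitone t ht hK hmono]
  exact tendsto_atTop_iInf ((phi_mono t ht).comp_antitone hmono)

/-- if `K_m` are compact and decrease to `K = ⋂_m K_m`, then
`φ(K_m) → φ(K)`. -/
theorem stmt6 (t : ℕ → ℝ) (ht : ∀ k, t k ∈ Set.Ioc (0:ℝ) 1)
    (htinj : Function.Injective t)
    (htdense : Set.Icc (0:ℝ) 1 ⊆ closure (Set.range t))
    (K : ℕ → Set Cz) (hK : ∀ m, IsCompact (K m)) (hmono : Antitone K) :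
    Tendsto (fun m => phi t ht (K m)) atTop (𝓝 (phi t ht (⋂ m, K m))) :=
  stmt6_general t ht K hK hmono

end
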